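/- arXiv:0806.4352 — 5 statements merged into one kernel-verified Lean document; each statement's English description precedes it below -/
import Mathlib

section
/- Let n ≥ 3 be an integer, let a, b, c, d be real numbers with b ≠ 0 and d ≠ 0, and let a₀, …, a_{n−3} : ℝ → ℝ be arbitrary functions. Define φ(x̄) = (x̄ − c(1 + a·x̄))/(b(1 + a·x̄)) on {x̄ : 1 + a·x̄ ≠ 0}. Then there exist functions ā₀, …, ā_{n−3} : ℝ → ℝ (depending only on a, b, c, d and the a_j, not on any particular solution) such that: for every open set U ⊆ ℝ and every function y : ℝ → ℝ that is n times continuously differentiable on U and satisfies y⁽ⁿ⁾(x) + Σ_{j=0}^{n−3} a_j(x)·y⁽ʲ⁾(x) = 0 for all x ∈ U, the function ȳ(x̄) := d·(1 + a·x̄)^{n−1}·y(φ(x̄)) satisfies ȳ⁽ⁿ⁾(x̄) + Σ_{j=0}^{n−3} ā_j(x̄)·ȳ⁽ʲ⁾(x̄) = 0 at every x̄ with 1 + a·x̄ ≠ 0 and φ(x̄) ∈ U. -/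
/-- The point transformation of the independent variable:
`φ(x̄) = (x̄ − c(1 + a x̄)) / (b(1 + a x̄))`. -/
noncomputable def phi (a b c : ℝ) (x : ℝ) : ℝ :=
  (x - c * (1 + a * x)) / (b * (1 + a * x))

/-!
Write `ȳ(t) = g(t) y(φ(t))` with `g(t) = d (1 + a t)^(n-1)` and `ψ = φ' = 1 / (b (1 + a t)^2)`.
Iterating the product and chain rules gives `ȳ⁽ⁱ⁾(t) = ∑_{k ≤ i} C i k t · y⁽ᵏ⁾(φ t)` with
coefficients `C i k` independent of `y`, forming a lower triangular matrix with diagonal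
`g ψ^i ≠ 0`. The weight `(1 + a t)^(n-1)` makes the top row trivial: for `y = (x - φ t)^k` with
`k < n`, `ȳ` is a polynomial of degree `< n`, so `0 = ȳ⁽ⁿ⁾(t) = C n k t · k!`. Hence
`ȳ⁽ⁿ⁾ = C n n · y⁽ⁿ⁾ ∘ φ`, and inverting the triangular system for the derivatives of order
`< n - 2` rewrites the lower-order terms of the equation in terms of `ȳ`, which yields the new
coefficients `Ā`.
-/

open Finset Matrix Filter Topology Polynomial
open scoped ContDiff

theorem iteratedDeriv_eval {𝕜 : Type*} [NontriviallyNormedField 𝕜] (p : 𝕜[X]) (n : ℕ) :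
    iteratedDeriv n (fun x => p.eval x) = fun x => (derivative^[n] p).eval x := by
  induction n generalizing p with
  | zero => simp
  | succ n ih =>
    have hderiv : deriv (fun x => p.eval x) = fun x => p.derivative.eval x :=
      funext fun x => p.deriv
    rw [iteratedDeriv_succ', hderiv, ih, Function.iterate_succ_apply]

theorem iteratedDeriv_sub_pow_self {𝕜 : Type*} [NontriviallyNormedField 𝕜] (x₀ : 𝕜) (j k : ℕ) :
    iteratedDeriv k (fun x => (x - x₀) ^ j) x₀ = if k = j then (j.factorial : 𝕜) else 0 := by
  rw [iteratedDeriv_comp_sub_const k (· ^ j) x₀]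
  simpa using iteratedDeriv_fun_pow_zero (𝕜 := 𝕜) (n := k) (m := j)

theorem ContDiffAt.hasDerivAt_iteratedDeriv {𝕜 F : Type*} [NontriviallyNormedField 𝕜]
    [NormedAddCommGroup F] [NormedSpace 𝕜 F] {f : 𝕜 → F} {x : 𝕜} {n : WithTop ℕ∞} {k : ℕ}
    (hf : ContDiffAt 𝕜 n f x) (hk : (k : WithTop ℕ∞) < n) :
    HasDerivAt (iteratedDeriv k f) (iteratedDeriv (k + 1) f x) x := by
  rw [iteratedDeriv_succ]
  refine DifferentiableAt.hasDerivAt ?_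
  rw [iteratedDeriv_eq_equiv_comp]
  exact (ContinuousMultilinearMap.piFieldEquiv 𝕜 (Fin k) F).symm.differentiableAt.comp x
    (hf.differentiableAt_iteratedFDeriv hk)

/-- `(g · y ∘ φ)⁽ⁱ⁾ = ∑ₖ chainCoeff g φ' i k · y⁽ᵏ⁾ ∘ φ`, by the product and chain rules. -/
noncomputable def chainCoeff {𝕜 : Type*} [NontriviallyNormedField 𝕜] (g ψ : 𝕜 → 𝕜) :
    ℕ → ℕ → 𝕜 → 𝕜
  | 0, 0 => g
  | 0, _ + 1 => 0
  | i + 1, 0 => deriv (chainCoeff g ψ i 0)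
  | i + 1, k + 1 => deriv (chainCoeff g ψ i (k + 1)) + ψ * chainCoeff g ψ i k

section chainCoeff

variable {𝕜 : Type*} [NontriviallyNormedField 𝕜] {g ψ : 𝕜 → 𝕜}

theorem chainCoeff_eq_zero_of_lt {i k : ℕ} (h : i < k) : chainCoeff g ψ i k = 0 := by
  induction i generalizing k with
  | zero => obtain ⟨k, rfl⟩ := Nat.exists_eq_succ_of_ne_zero h.ne'; rfl
  | succ i ih =>
    obtain ⟨k, rfl⟩ := Nat.exists_eq_succ_of_ne_zero (by omega : k ≠ 0)
    simp [chainCoeff, ih (by omega : i < k + 1), ih (by omega : i < k)]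

theorem chainCoeff_self (i : ℕ) : chainCoeff g ψ i i = g * ψ ^ i := by
  induction i with
  | zero => simp [chainCoeff]
  | succ i ih =>
    simp only [chainCoeff, chainCoeff_eq_zero_of_lt i.lt_succ_self, deriv_zero, ih]
    ring

theorem contDiffOn_chainCoeff {V : Set 𝕜} (hV : IsOpen V) (hg : ContDiffOn 𝕜 ∞ g V)
    (hψ : ContDiffOn 𝕜 ∞ ψ V) (i k : ℕ) : ContDiffOn 𝕜 ∞ (chainCoeff g ψ i k) V := by
  induction i generalizing k with
  | zero => cases k with
    | zero => exact hg
    | succ k => exact contDiffOn_const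
  | succ i ih =>
    have hderiv (k : ℕ) : ContDiffOn 𝕜 ∞ (deriv (chainCoeff g ψ i k)) V :=
      (ih k).deriv_of_isOpen hV le_rfl
    cases k with
    | zero => exact hderiv 0
    | succ k => exact (hderiv (k + 1)).add (hψ.mul (ih k))

theorem sum_chainCoeff_succ (i : ℕ) (t : 𝕜) (z : ℕ → 𝕜) :
    ∑ k ∈ range (i + 2), chainCoeff g ψ (i + 1) k t * z k =
      ∑ k ∈ range (i + 1), (deriv (chainCoeff g ψ i k) t * z k +
        chainCoeff g ψ i k t * (z (k + 1) * ψ t)) := by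
  have hlast : deriv (chainCoeff g ψ i (i + 1)) t * z (i + 1) = 0 := by
    simp [chainCoeff_eq_zero_of_lt i.lt_succ_self]
  rw [sum_add_distrib, ← add_zero (∑ k ∈ range (i + 1), _), ← hlast, ← sum_range_succ,
    sum_range_succ', sum_range_succ' (fun k => deriv _ t * z k)]
  simp only [chainCoeff, Pi.add_apply, Pi.mul_apply, add_mul, sum_add_distrib]
  ring_nf

theorem iteratedDeriv_mul_comp_eq_sum {V U : Set 𝕜} {φ y : 𝕜 → 𝕜} {n i : ℕ} {t : 𝕜}
    (hV : IsOpen V) (hU : IsOpen U) (hg : ContDiffOn 𝕜 ∞ g V) (hψ : ContDiffOn 𝕜 ∞ ψ V)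
    (hφ : ∀ s ∈ V, HasDerivAt φ (ψ s) s) (hy : ContDiffOn 𝕜 n y U) (hi : i ≤ n) (ht : t ∈ V)
    (htU : φ t ∈ U) :
    iteratedDeriv i (fun s => g s * y (φ s)) t =
      ∑ k ∈ range (i + 1), chainCoeff g ψ i k t * iteratedDeriv k y (φ t) := by
  induction i generalizing t with
  | zero => simp [chainCoeff]
  | succ i ih =>
    have hW : IsOpen (V ∩ φ ⁻¹' U) :=
      ContinuousOn.isOpen_inter_preimage (fun s hs => (hφ s hs).continuousAt.continuousWithinAt)
        hV hU
    have hev : iteratedDeriv i (fun s => g s * y (φ s)) =ᶠ[𝓝 t]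
        fun s => ∑ k ∈ range (i + 1), chainCoeff g ψ i k s * iteratedDeriv k y (φ s) :=
      eventuallyEq_of_mem (hW.mem_nhds ⟨ht, htU⟩) fun s hs => ih (by omega) hs.1 hs.2
    have hterm (k : ℕ) (hk : k ∈ range (i + 1)) :
        HasDerivAt (fun s => chainCoeff g ψ i k s * iteratedDeriv k y (φ s))
          (deriv (chainCoeff g ψ i k) t * iteratedDeriv k y (φ t) +
            chainCoeff g ψ i k t * (iteratedDeriv (k + 1) y (φ t) * ψ t)) t := by
      have hkn : (k : WithTop ℕ∞) < n := by exact_mod_cast (mem_range.mp hk).trans_le hi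
      have hyk := (hy.contDiffAt (hU.mem_nhds htU)).hasDerivAt_iteratedDeriv hkn
      have hC := (contDiffOn_chainCoeff hV hg hψ i k).differentiableOn (by simp) t ht
      exact (hC.differentiableAt (hV.mem_nhds ht)).hasDerivAt.mul (hyk.comp t (hφ t ht))
    rw [iteratedDeriv_succ, hev.deriv_eq, (HasDerivAt.fun_sum hterm).deriv, sum_chainCoeff_succ]

end chainCoeff

section Moebius

variable {n : ℕ} {a b c d : ℝ}

theorem isOpen_one_add_mul_ne_zero (a : ℝ) : IsOpen {t : ℝ | 1 + a * t ≠ 0} :=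
  isOpen_ne_fun (by fun_prop) continuous_const

theorem hasDerivAt_phi (hb : b ≠ 0) {t : ℝ} (ht : 1 + a * t ≠ 0) :
    HasDerivAt (phi a b c) (b * (1 + a * t) ^ 2)⁻¹ t := by
  have hlin (p : ℝ) : HasDerivAt (fun x => p * (1 + a * x)) (p * a) t := by
    simpa using ((hasDerivAt_id' t).const_mul a |>.const_add 1).const_mul p
  refine (((hasDerivAt_id' t).fun_sub (hlin c)).fun_div (hlin b)
    (mul_ne_zero hb ht)).congr_deriv ?_
  field_simp
  ring

theorem phi_sub_phi (hb : b ≠ 0) {s t : ℝ} (hs : 1 + a * s ≠ 0) (ht : 1 + a * t ≠ 0) :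
    phi a b c s - phi a b c t = (s - t) / (b * (1 + a * s) * (1 + a * t)) := by
  have hbs : b * (1 + a * s) ≠ 0 := mul_ne_zero hb hs
  have hbt : b * (1 + a * t) ≠ 0 := mul_ne_zero hb ht
  rw [phi, phi, div_sub_div _ _ hbs hbt, div_eq_div_iff (mul_ne_zero hbs hbt)
    (mul_ne_zero hbs ht)]
  ring

noncomputable def moebiusCoeff (n : ℕ) (a b d : ℝ) : ℕ → ℕ → ℝ → ℝ :=
  chainCoeff (fun s => d * (1 + a * s) ^ (n - 1)) fun s => (b * (1 + a * s) ^ 2)⁻¹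

theorem iteratedDeriv_moebius_eq_sum (hb : b ≠ 0) {U : Set ℝ} (hU : IsOpen U) {y : ℝ → ℝ}
    (hy : ContDiffOn ℝ n y U) {i : ℕ} (hi : i ≤ n) {t : ℝ} (ht : 1 + a * t ≠ 0)
    (htU : phi a b c t ∈ U) :
    iteratedDeriv i (fun s => d * (1 + a * s) ^ (n - 1) * y (phi a b c s)) t =
      ∑ k ∈ range (i + 1), moebiusCoeff n a b d i k t * iteratedDeriv k y (phi a b c t) :=
  iteratedDeriv_mul_comp_eq_sum (isOpen_one_add_mul_ne_zero a) hU (by fun_prop)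
    (by fun_prop (disch := exact fun s hs => mul_ne_zero hb (pow_ne_zero 2 hs)))
    (fun _ hs => hasDerivAt_phi hb hs) hy hi ht htU

theorem moebiusCoeff_self_ne_zero (hb : b ≠ 0) (hd : d ≠ 0) (i : ℕ) {t : ℝ}
    (ht : 1 + a * t ≠ 0) : moebiusCoeff n a b d i i t ≠ 0 := by
  simp [moebiusCoeff, chainCoeff_self, hb, hd, ht]

theorem moebiusCoeff_top_eq_zero (hb : b ≠ 0) {j : ℕ} (hj : j < n) {t : ℝ}
    (ht : 1 + a * t ≠ 0) : moebiusCoeff n a b d n j t = 0 := by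
  set q : ℝ[X] := C (d / (b * (1 + a * t)) ^ j) * (1 + C a * X) ^ (n - 1 - j) * (X - C t) ^ j
  have hq : (fun s => d * (1 + a * s) ^ (n - 1) * (phi a b 0 s - phi a b 0 t) ^ j) =ᶠ[𝓝 t]
      fun s => q.eval s := by
    filter_upwards [(isOpen_one_add_mul_ne_zero a).mem_nhds ht] with s hs
    rw [phi_sub_phi hb hs ht, show n - 1 = n - 1 - j + j by omega]
    simp only [q, eval_mul, eval_pow, eval_add, eval_one, eval_sub, eval_C, eval_X, pow_add,
      div_pow, mul_pow]
    field_simp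
  have hqdeg : q.natDegree < n := by
    have : q.natDegree ≤ n - 1 - j + j := by simp only [q]; compute_degree
    omega
  have hpow : ContDiffOn ℝ n (fun x : ℝ => (x - phi a b 0 t) ^ j) Set.univ := by fun_prop
  have hrep := iteratedDeriv_moebius_eq_sum (c := 0) (d := d) hb isOpen_univ hpow le_rfl ht
    (Set.mem_univ _)
  rw [hq.iteratedDeriv_eq, iteratedDeriv_eval, iterate_derivative_eq_zero hqdeg,
    sum_eq_single_of_mem j (mem_range.mpr (by omega))
      fun k _ hkj => by simp [iteratedDeriv_sub_pow_self, hkj]] at hrep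
  simpa [iteratedDeriv_sub_pow_self, Nat.factorial_ne_zero] using hrep.symm

end Moebius

section TransformedEquation

variable {n m : ℕ} {a b c d t : ℝ} {U : Set ℝ} {y : ℝ → ℝ}

noncomputable def coeffMatrix (C : ℕ → ℕ → ℝ → ℝ) (m : ℕ) (t : ℝ) : Matrix (Fin m) (Fin m) ℝ :=
  of fun i k => C i k t

noncomputable def transformedCoeff (n m : ℕ) (a b c d : ℝ) (A : ℕ → ℝ → ℝ) (j : ℕ) (t : ℝ) : ℝ :=
  if h : j < m then
    moebiusCoeff n a b d n n t *
      ((fun i : Fin m => A i (phi a b c t)) ᵥ* (coeffMatrix (moebiusCoeff n a b d) m t)⁻¹) ⟨j, h⟩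
  else 0

theorem isUnit_det_coeffMatrix_moebiusCoeff (hb : b ≠ 0) (hd : d ≠ 0) (ht : 1 + a * t ≠ 0) :
    IsUnit (coeffMatrix (moebiusCoeff n a b d) m t).det := by
  have hlower : (coeffMatrix (moebiusCoeff n a b d) m t).IsLowerTriangular :=
    fun i k (hik : i < k) => by simp [coeffMatrix, moebiusCoeff, chainCoeff_eq_zero_of_lt hik]
  rw [isUnit_iff_ne_zero, det_of_isLowerTriangular _ hlower]
  exact prod_ne_zero_iff.mpr fun i _ => moebiusCoeff_self_ne_zero hb hd i ht

theorem iteratedDeriv_moebius_eq_mulVec (hb : b ≠ 0) (hU : IsOpen U) (hy : ContDiffOn ℝ n y U)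
    (hm : m ≤ n) (ht : 1 + a * t ≠ 0) (htU : phi a b c t ∈ U) :
    (fun j : Fin m => iteratedDeriv j (fun s => d * (1 + a * s) ^ (n - 1) * y (phi a b c s)) t) =
      coeffMatrix (moebiusCoeff n a b d) m t *ᵥ
        fun k : Fin m => iteratedDeriv k y (phi a b c t) := by
  funext i
  simp only [mulVec, dotProduct, coeffMatrix, of_apply]
  rw [iteratedDeriv_moebius_eq_sum hb hU hy (by omega) ht htU,
    Fin.sum_univ_eq_sum_range (fun k => moebiusCoeff n a b d i k t * iteratedDeriv k y _)]
  refine sum_subset (range_subset_range.mpr (by omega)) fun k _ hk => ?_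
  simp [moebiusCoeff, chainCoeff_eq_zero_of_lt (not_lt.mp (mem_range.not.mp hk))]

theorem iteratedDeriv_moebius_eq_mul_iteratedDeriv (hb : b ≠ 0) (hU : IsOpen U)
    (hy : ContDiffOn ℝ n y U) (ht : 1 + a * t ≠ 0) (htU : phi a b c t ∈ U) :
    iteratedDeriv n (fun s => d * (1 + a * s) ^ (n - 1) * y (phi a b c s)) t =
      moebiusCoeff n a b d n n t * iteratedDeriv n y (phi a b c t) := by
  rw [iteratedDeriv_moebius_eq_sum hb hU hy le_rfl ht htU, sum_range_succ,
    sum_eq_zero fun k hk => by rw [moebiusCoeff_top_eq_zero hb (mem_range.mp hk) ht, zero_mul],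
    zero_add]

theorem iteratedDeriv_moebius_add_sum_transformedCoeff (hb : b ≠ 0) (hd : d ≠ 0)
    (A : ℕ → ℝ → ℝ) (hU : IsOpen U) (hy : ContDiffOn ℝ n y U) (hm : m ≤ n)
    (ht : 1 + a * t ≠ 0) (htU : phi a b c t ∈ U) :
    iteratedDeriv n (fun s => d * (1 + a * s) ^ (n - 1) * y (phi a b c s)) t +
        ∑ j ∈ range m, transformedCoeff n m a b c d A j t *
          iteratedDeriv j (fun s => d * (1 + a * s) ^ (n - 1) * y (phi a b c s)) t =
      moebiusCoeff n a b d n n t * (iteratedDeriv n y (phi a b c t) +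
        ∑ j ∈ range m, A j (phi a b c t) * iteratedDeriv j y (phi a b c t)) := by
  set M := coeffMatrix (moebiusCoeff n a b d) m t
  set α : Fin m → ℝ := fun i => A i (phi a b c t)
  set Y : Fin m → ℝ := fun k => iteratedDeriv k y (phi a b c t)
  have hsum : ∑ j ∈ range m, transformedCoeff n m a b c d A j t *
      iteratedDeriv j (fun s => d * (1 + a * s) ^ (n - 1) * y (phi a b c s)) t =
        moebiusCoeff n a b d n n t * (α ᵥ* M⁻¹) ⬝ᵥ (M *ᵥ Y) := by
    rw [← iteratedDeriv_moebius_eq_mulVec hb hU hy hm ht htU, dotProduct, mul_sum,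
      ← Fin.sum_univ_eq_sum_range]
    refine sum_congr rfl fun j _ => ?_
    simp only [transformedCoeff, dif_pos j.isLt, Fin.eta]
    ring
  rw [hsum, dotProduct_mulVec, vecMul_vecMul,
    nonsing_inv_mul _ (isUnit_det_coeffMatrix_moebiusCoeff hb hd ht), vecMul_one,
    iteratedDeriv_moebius_eq_mul_iteratedDeriv hb hU hy ht htU, mul_add, dotProduct,
    Fin.sum_univ_eq_sum_range (fun j => A j _ * iteratedDeriv j y _)]

end TransformedEquation

theorem stmt_0_general (n : ℕ) (a b c d : ℝ) (hb : b ≠ 0) (hd : d ≠ 0)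
    (A : ℕ → ℝ → ℝ) :
    ∃ Abar : ℕ → ℝ → ℝ,
      ∀ (U : Set ℝ), IsOpen U →
        ∀ y : ℝ → ℝ, ContDiffOn ℝ (n : ℕ∞) y U →
          (∀ x ∈ U,
              iteratedDeriv n y x
                + ∑ j ∈ Finset.range (n - 2), A j x * iteratedDeriv j y x = 0) →
          ∀ xb : ℝ, 1 + a * xb ≠ 0 → phi a b c xb ∈ U →
            iteratedDeriv n
                (fun s => d * (1 + a * s) ^ (n - 1) * y (phi a b c s)) xb
              + ∑ j ∈ Finset.range (n - 2),
                  Abar j xb *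
                    iteratedDeriv j
                      (fun s => d * (1 + a * s) ^ (n - 1) * y (phi a b c s)) xb
              = 0 :=
  ⟨transformedCoeff n (n - 2) a b c d A, fun _U hU _y hy hsol _t ht htU => by
    rw [iteratedDeriv_moebius_add_sum_transformedCoeff hb hd A hU hy (Nat.sub_le n 2) ht htU,
      hsol _ htU, mul_zero]⟩

/-- the transformation `x = φ(x̄)`, `ȳ(x̄) = d (1+a x̄)^(n-1) y(φ(x̄))`
maps every linear ODE in the canonical form
`y⁽ⁿ⁾ + a_{n-3} y⁽ⁿ⁻³⁾ + ⋯ + a₀ y = 0` to an equation of the same canonical form. -/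
theorem stmt_0 (n : ℕ) (hn : 3 ≤ n) (a b c d : ℝ) (hb : b ≠ 0) (hd : d ≠ 0)
    (A : ℕ → ℝ → ℝ) :
    ∃ Abar : ℕ → ℝ → ℝ,
      ∀ (U : Set ℝ), IsOpen U →
        ∀ y : ℝ → ℝ, ContDiffOn ℝ (n : ℕ∞) y U →
          (∀ x ∈ U,
              iteratedDeriv n y x
                + ∑ j ∈ Finset.range (n - 2), A j x * iteratedDeriv j y x = 0) →
          ∀ xb : ℝ, 1 + a * xb ≠ 0 → phi a b c xb ∈ U →
            iteratedDeriv n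
                (fun s => d * (1 + a * s) ^ (n - 1) * y (phi a b c s)) xb
              + ∑ j ∈ Finset.range (n - 2),
                  Abar j xb *
                    iteratedDeriv j
                      (fun s => d * (1 + a * s) ^ (n - 1) * y (phi a b c s)) xb
              = 0 :=
  stmt_0_general n a b c d hb hd A
end

section
/- Let n ≥ 1 be an integer, let a, b, c, d be real numbers with b ≠ 0 and d ≠ 0, and let y : ℝ → ℝ be n times continuously differentiable. Define φ(x̄) = (x̄ − c(1 + a·x̄))/(b(1 + a·x̄)) and ȳ(x̄) = d·(1 + a·x̄)^{n−1}·y(φ(x̄)) on the set {x̄ : 1 + a·x̄ ≠ 0}. Then for every x̄ with 1 + a·x̄ ≠ 0, the n-th derivative of y at φ(x̄) equals (bⁿ·(1 + a·x̄)^{n+1}/d) times the n-th derivative of ȳ at x̄; that is, y⁽ⁿ⁾(φ(x̄)) = bⁿ(1 + a·x̄)^{n+1} ȳ⁽ⁿ⁾(x̄)/d. -/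
/-!
Write `n = m + 1`. For `a ≠ 0`, `1 + a x̄ = a (x̄ + a⁻¹)` and `φ(x̄)` is an affine function of
`(x̄ + a⁻¹)⁻¹`, so away from the pole `1 + a x̄ = 0` the function `ȳ` is, up to the factor
`d aᵐ` and a translation, `s ↦ sᵐ g(s⁻¹)` with `g` an affine reparametrisation of `y`.
Everything then follows from the classical inversion identity
`(sᵐ g(1/s))⁽ᵐ⁺¹⁾ = (-1)ᵐ⁺¹ s^-(m+2) g⁽ᵐ⁺¹⁾(1/s)`, proved by induction from the Leibniz rule
`(s u)⁽ᵏ⁺¹⁾ = s u⁽ᵏ⁺¹⁾ + (k+1) u⁽ᵏ⁾`.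
For `a = 0` the map `φ` is affine.
-/

open Topology Filter

section

variable {𝕜 : Type*} [NontriviallyNormedField 𝕜]

theorem iteratedDeriv_succ_id_mul {n : ℕ} {u : 𝕜 → 𝕜} {x : 𝕜}
    (hu : ContDiffAt 𝕜 (n + 1) u x) :
    iteratedDeriv (n + 1) (fun s => s * u s) x
      = (n + 1) * iteratedDeriv n u x + x * iteratedDeriv (n + 1) u x := by
  rw [iteratedDeriv_fun_mul (f := fun s => s) contDiffAt_fun_id hu]
  simp [Finset.sum_range_succ', iteratedDeriv_fun_id]

theorem iteratedDeriv_comp_add_mul {n : ℕ} {f : 𝕜 → 𝕜} (hf : ContDiff 𝕜 n f) (q p x : 𝕜) :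
    iteratedDeriv n (fun s => f (q + p * s)) x = p ^ n * iteratedDeriv n f (q + p * x) := by
  have hfq : ContDiff 𝕜 n (fun z => f (q + z)) := hf.comp (contDiff_const.add contDiff_id)
  rw [iteratedDeriv_comp_const_mul hfq, iteratedDeriv_comp_const_add]

theorem iteratedDeriv_pow_mul_comp_inv {m : ℕ} {f : 𝕜 → 𝕜} (hf : ContDiff 𝕜 (m + 1) f)
    {x : 𝕜} (hx : x ≠ 0) :
    iteratedDeriv (m + 1) (fun s => s ^ m * f s⁻¹) x
      = (-1) ^ (m + 1) * x⁻¹ ^ (m + 2) * iteratedDeriv (m + 1) f x⁻¹ := by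
  induction m generalizing x with
  | zero =>
    have hf' : HasDerivAt (fun s => f s⁻¹) (deriv f x⁻¹ * -(x ^ 2)⁻¹) x :=
      ((hf.differentiable one_ne_zero).differentiableAt.hasDerivAt).comp x (hasDerivAt_inv hx)
    simp only [pow_zero, one_mul]
    rw [iteratedDeriv_one, iteratedDeriv_one, hf'.deriv]
    ring
  | succ m ih =>
    set u : 𝕜 → 𝕜 := fun s => s ^ m * f s⁻¹
    have hu : ContDiffAt 𝕜 (m + 1 + 1) u x :=
      (contDiffAt_id.pow m).mul (hf.contDiffAt.comp x (contDiffAt_inv 𝕜 hx))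
    have hih : iteratedDeriv (m + 1) u =ᶠ[𝓝 x]
        fun z => (-1) ^ (m + 1) * (z⁻¹ ^ (m + 2) * iteratedDeriv (m + 1) f z⁻¹) := by
      filter_upwards [isOpen_ne.mem_nhds hx] with z hz
      rw [ih hf.of_succ hz, mul_assoc]
    have hf_deriv : HasDerivAt (iteratedDeriv (m + 1) f) (iteratedDeriv (m + 2) f x⁻¹) x⁻¹ := by
      rw [iteratedDeriv_succ (n := m + 1)]
      exact (hf.differentiable_iteratedDeriv (m + 1) (by norm_cast; omega)).differentiableAt
        |>.hasDerivAt
    have hderiv : HasDerivAt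
        (fun z => (-1) ^ (m + 1) * (z⁻¹ ^ (m + 2) * iteratedDeriv (m + 1) f z⁻¹)) _ x :=
      (((hasDerivAt_pow (m + 2) x⁻¹).fun_mul hf_deriv).comp x (hasDerivAt_inv hx)).const_mul _
    have hmul : (fun s => s ^ (m + 1) * f s⁻¹) = fun s => s * u s := by
      funext s; simp only [u]; ring
    rw [hmul, iteratedDeriv_succ_id_mul hu, iteratedDeriv_succ (n := m + 1), hih.deriv_eq,
      hderiv.deriv, hih.eq_of_nhds, show m + 1 + 1 = m + 2 by ring]
    generalize iteratedDeriv (m + 1) f x⁻¹ = A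
    generalize iteratedDeriv (m + 2) f x⁻¹ = B
    push_cast
    simp only [inv_pow]
    field_simp
    ring

end

theorem phi_zero (b c s : ℝ) : phi 0 b c s = -(c / b) + b⁻¹ * s := by
  simp only [phi]
  ring

theorem one_add_mul_eq_mul_add_inv {a : ℝ} (ha : a ≠ 0) (s : ℝ) :
    1 + a * s = a * (s + a⁻¹) := by
  rw [mul_add, mul_inv_cancel₀ ha, add_comm]

theorem phi_eq_add_mul_inv {a b : ℝ} (ha : a ≠ 0) (hb : b ≠ 0) (c : ℝ) {s : ℝ}
    (hs : 1 + a * s ≠ 0) :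
    phi a b c s = ((a * b)⁻¹ - c / b) + -(a ^ 2 * b)⁻¹ * (s + a⁻¹)⁻¹ := by
  have hshift : s + a⁻¹ = (1 + a * s) / a := by
    rw [one_add_mul_eq_mul_add_inv ha, mul_div_cancel_left₀ _ ha]
  rw [phi, hshift]
  generalize ht : 1 + a * s = t at hs ⊢
  field_simp
  linear_combination ht

theorem iteratedDeriv_pow_mul_comp_phi {m : ℕ} {a b c x : ℝ} {y : ℝ → ℝ}
    (hy : ContDiff ℝ (m + 1) y) (hb : b ≠ 0) (hx : 1 + a * x ≠ 0) :
    iteratedDeriv (m + 1) (fun s => (1 + a * s) ^ m * y (phi a b c s)) x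
      = (b ^ (m + 1) * (1 + a * x) ^ (m + 2))⁻¹ * iteratedDeriv (m + 1) y (phi a b c x) := by
  rcases eq_or_ne a 0 with rfl | ha
  · simp only [phi_zero, zero_mul, add_zero, one_pow, one_mul]
    rw [iteratedDeriv_comp_add_mul (n := m + 1) hy, inv_pow, mul_one]
  set g : ℝ → ℝ := fun w => y (((a * b)⁻¹ - c / b) + -(a ^ 2 * b)⁻¹ * w)
  have hg : ContDiff ℝ (m + 1) g := hy.comp (contDiff_const.add (contDiff_const.mul contDiff_id))
  have hev : (fun s => (1 + a * s) ^ m * y (phi a b c s)) =ᶠ[𝓝 x]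
      fun s => a ^ m * ((s + a⁻¹) ^ m * g (s + a⁻¹)⁻¹) := by
    have hpole : ∀ᶠ s in 𝓝 x, 1 + a * s ≠ 0 :=
      (by fun_prop : Continuous fun s : ℝ => 1 + a * s).continuousAt.eventually_ne hx
    filter_upwards [hpole] with s hs
    rw [phi_eq_add_mul_inv ha hb c hs, one_add_mul_eq_mul_add_inv ha, mul_pow, mul_assoc]
  have hτ : x + a⁻¹ ≠ 0 := by
    rw [one_add_mul_eq_mul_add_inv ha] at hx
    exact right_ne_zero_of_mul hx
  rw [hev.iteratedDeriv_eq, iteratedDeriv_const_mul_field,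
    iteratedDeriv_comp_add_const _ (fun z => z ^ m * g z⁻¹)]
  beta_reduce
  rw [iteratedDeriv_pow_mul_comp_inv hg hτ, iteratedDeriv_comp_add_mul (n := m + 1) hy,
    ← phi_eq_add_mul_inv ha hb c hx, one_add_mul_eq_mul_add_inv ha]
  generalize x + a⁻¹ = τ at hτ ⊢
  rw [neg_pow (a ^ 2 * b)⁻¹, inv_pow, inv_pow]
  field_simp
  rw [← pow_mul, pow_mul', neg_one_sq, one_pow]
  ring

/-- under the transformation `x = φ(x̄)`,
`ȳ(x̄) = d (1+a x̄)^(n-1) y(φ(x̄))`, the top-order derivative transforms as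
`y⁽ⁿ⁾(φ(x̄)) = bⁿ (1+a x̄)^(n+1) ȳ⁽ⁿ⁾(x̄) / d`. -/
theorem stmt_1 (n : ℕ) (hn : 1 ≤ n) (a b c d : ℝ) (hb : b ≠ 0) (hd : d ≠ 0)
    (y : ℝ → ℝ) (hy : ContDiff ℝ (n : ℕ∞) y)
    (xb : ℝ) (ht : 1 + a * xb ≠ 0) :
    iteratedDeriv n y (phi a b c xb)
      = b ^ n * (1 + a * xb) ^ (n + 1)
          * iteratedDeriv n
              (fun s => d * (1 + a * s) ^ (n - 1) * y (phi a b c s)) xb / d := by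
  obtain ⟨m, rfl⟩ : ∃ m, n = m + 1 := ⟨n - 1, by omega⟩
  simp only [Nat.add_sub_cancel, mul_assoc d]
  rw [iteratedDeriv_const_mul_field, iteratedDeriv_pow_mul_comp_phi (by exact_mod_cast hy) hb ht]
  field_simp
end

section
/- Let m ≥ 0 be an integer and let g, T : ℝ → ℝ be m times continuously differentiable functions such that g′(x̄) ≠ 0 and T(x̄) ≠ 0 for all x̄. Then there exist functions c₀, c₁, …, c_m : ℝ → ℝ, depending only on g and T (not on y), with c_m = T/(g′)^m, such that for every m times continuously differentiable function y : ℝ → ℝ, setting ȳ(x̄) := y(g(x̄))/T(x̄), one has y⁽ᵐ⁾(g(x̄)) = Σ_{k=0}^{m} c_k(x̄)·ȳ⁽ᵏ⁾(x̄) for all x̄ ∈ ℝ. -/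
/-!
If `f (g x) = ∑_{k ≤ n} c_k(x) ȳ⁽ᵏ⁾(x)`, the chain rule on the left and the Leibniz rule on
the right, after division by `g′(x)`, give `f′ (g x) = ∑_{k ≤ n+1} c'_k(x) ȳ⁽ᵏ⁾(x)` with
`c'_k = (c_k′ + c_{k-1}) / g′`. Starting from `y (g x) = T(x) ȳ(x)`, i.e. `c = (T, 0, 0, …)`,
this recursion yields coefficients that do not depend on `y`, with top coefficient `T / (g′)ⁿ`.
Each step costs one derivative of the coefficients, so for `g, T ∈ Cᵐ` the `n`-th coefficients
are `C^(m-n)`, which is just enough to reach `n = m`.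
-/

open Finset

noncomputable def coeffStep (g : ℝ → ℝ) (c : ℕ → ℝ → ℝ) : ℕ → ℝ → ℝ
  | 0 => fun x => deriv (c 0) x / deriv g x
  | k + 1 => fun x => (deriv (c (k + 1)) x + c k x) / deriv g x

section coeffStep

variable {g : ℝ → ℝ} {c : ℕ → ℝ → ℝ}

theorem contDiff_coeffStep {r : ℕ} (hg : ContDiff ℝ (r + 1) g) (hg' : ∀ x, deriv g x ≠ 0)
    (hc : ∀ k, ContDiff ℝ (r + 1) (c k)) (k : ℕ) : ContDiff ℝ r (coeffStep g c k) := by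
  cases k with
  | zero => exact (hc 0).deriv'.div hg.deriv' hg'
  | succ k =>
    exact ((hc (k + 1)).deriv'.add ((hc k).of_le (by norm_cast; omega))).div hg.deriv' hg'

theorem coeffStep_succ_of_eq_zero {k : ℕ} (hk : c (k + 1) = 0) :
    coeffStep g c (k + 1) = fun x => c k x / deriv g x := by
  funext x
  simp [coeffStep, hk]

theorem sum_coeffStep_mul {n : ℕ} (hn : c (n + 1) = 0) (v : ℕ → ℝ) (x : ℝ) :
    ∑ k ∈ range (n + 2), coeffStep g c k x * v k
      = (∑ k ∈ range (n + 1), (deriv (c k) x * v k + c k x * v (k + 1))) / deriv g x := by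
  have htop : deriv (c (n + 1)) x = 0 := by simp [hn]
  simp only [sum_range_succ' _ (n + 1), coeffStep, add_div, add_mul, sum_add_distrib,
    div_mul_eq_mul_div, sum_div]
  rw [sum_range_succ (fun k => deriv (c (k + 1)) x * v (k + 1) / deriv g x), htop,
    sum_range_succ' (fun k => deriv (c k) x * v k / deriv g x)]
  ring

end coeffStep

theorem deriv_comp_eq_sum_coeffStep {f g u : ℝ → ℝ} {c : ℕ → ℝ → ℝ} {n : ℕ}
    (hf : Differentiable ℝ f) (hg : Differentiable ℝ g) (hg' : ∀ x, deriv g x ≠ 0)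
    (hu : ContDiff ℝ (n + 1) u) (hc : ∀ k ≤ n, Differentiable ℝ (c k)) (hcn : c (n + 1) = 0)
    (h : ∀ x, f (g x) = ∑ k ∈ range (n + 1), c k x * iteratedDeriv k u x) (x : ℝ) :
    deriv f (g x) = ∑ k ∈ range (n + 2), coeffStep g c k x * iteratedDeriv k u x := by
  have hdu : ∀ k ≤ n, Differentiable ℝ (iteratedDeriv k u) := fun k hk =>
    hu.differentiable_iteratedDeriv k (by norm_cast; omega)
  have hchain : deriv (fun x => f (g x)) x = deriv f (g x) * deriv g x :=
    deriv_comp x (hf (g x)) (hg x)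
  have hleibniz : deriv (fun x => ∑ k ∈ range (n + 1), c k x * iteratedDeriv k u x) x
      = ∑ k ∈ range (n + 1),
          (deriv (c k) x * iteratedDeriv k u x + c k x * iteratedDeriv (k + 1) u x) := by
    rw [deriv_fun_sum (A := fun k y => c k y * iteratedDeriv k u y) fun k hk =>
      ((hc k (mem_range_succ_iff.mp hk)).mul (hdu k (mem_range_succ_iff.mp hk))) x]
    refine sum_congr rfl fun k hk => ?_
    rw [mem_range_succ_iff] at hk
    rw [deriv_fun_mul (hc k hk x) (hdu k hk x), iteratedDeriv_succ]
  rw [sum_coeffStep_mul hcn, ← hleibniz, ← funext h, hchain, mul_div_cancel_right₀ _ (hg' x)]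

noncomputable def transformCoeff (g T : ℝ → ℝ) (n : ℕ) : ℕ → ℝ → ℝ :=
  (coeffStep g)^[n] (Pi.single 0 T)

section transformCoeff

variable {g T : ℝ → ℝ}

theorem transformCoeff_succ (n : ℕ) :
    transformCoeff g T (n + 1) = coeffStep g (transformCoeff g T n) :=
  Function.iterate_succ_apply' ..

theorem transformCoeff_eq_zero_of_lt {n k : ℕ} (hnk : n < k) : transformCoeff g T n k = 0 := by
  induction n generalizing k with
  | zero => exact Pi.single_eq_of_ne (Nat.pos_iff_ne_zero.mp hnk) _
  | succ n ih =>
    obtain ⟨j, rfl⟩ : ∃ j, k = j + 1 := ⟨k - 1, by omega⟩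
    rw [transformCoeff_succ, coeffStep_succ_of_eq_zero (ih (by omega)), ih (by omega)]
    funext x
    simp

theorem transformCoeff_self (n : ℕ) :
    transformCoeff g T n n = fun x => T x / deriv g x ^ n := by
  induction n with
  | zero => simp [transformCoeff]
  | succ n ih =>
    rw [transformCoeff_succ,
      coeffStep_succ_of_eq_zero (transformCoeff_eq_zero_of_lt n.lt_succ_self), ih]
    simp [pow_succ, div_div]

theorem contDiff_transformCoeff {m n : ℕ} (hg : ContDiff ℝ m g) (hg' : ∀ x, deriv g x ≠ 0)
    (hT : ContDiff ℝ m T) (hnm : n ≤ m) (k : ℕ) :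
    ContDiff ℝ (m - n : ℕ) (transformCoeff g T n k) := by
  induction n generalizing k with
  | zero =>
    rcases eq_or_ne k 0 with rfl | hk
    · simpa [transformCoeff] using hT
    · rw [transformCoeff, Function.iterate_zero_apply, Pi.single_eq_of_ne hk]
      exact contDiff_const
  | succ n ih =>
    have hmn : m - n = (m - (n + 1) : ℕ) + 1 := by omega
    rw [transformCoeff_succ]
    refine contDiff_coeffStep (hg.of_le ?_) hg' (fun j => ?_) k
    · exact_mod_cast (by omega : m - (n + 1) + 1 ≤ m)
    · exact_mod_cast hmn ▸ ih (by omega) j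

theorem iteratedDeriv_comp_eq_sum_transformCoeff {m n : ℕ} (hg : ContDiff ℝ m g)
    (hg' : ∀ x, deriv g x ≠ 0) (hT : ContDiff ℝ m T) (hT0 : ∀ x, T x ≠ 0) {y : ℝ → ℝ}
    (hy : ContDiff ℝ m y) (hnm : n ≤ m) (x : ℝ) :
    iteratedDeriv n y (g x) = ∑ k ∈ range (n + 1),
      transformCoeff g T n k x * iteratedDeriv k (fun s => y (g s) / T s) x := by
  induction n generalizing x with
  | zero => simp [transformCoeff, mul_div_cancel₀ _ (hT0 x)]
  | succ n ih =>
    rw [iteratedDeriv_succ, transformCoeff_succ]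
    refine deriv_comp_eq_sum_coeffStep ?_ ?_ hg' ?_ (fun k _ => ?_)
      (transformCoeff_eq_zero_of_lt n.lt_succ_self) (ih (by omega)) x
    · exact hy.differentiable_iteratedDeriv n (by exact_mod_cast hnm)
    · exact hg.differentiable (by exact_mod_cast (by omega : m ≠ 0))
    · exact ((hy.comp hg).div hT hT0).of_le (by exact_mod_cast hnm)
    · exact (contDiff_transformCoeff hg hg' hT (by omega) k).differentiable
        (by exact_mod_cast (by omega : m - n ≠ 0))

end transformCoeff

/-- under a point transformation `x = g(x̄)`, `y(g(x̄)) = T(x̄) ȳ(x̄)`,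
every derivative `y⁽ᵐ⁾(g(x̄))` is a linear combination, with coefficient functions
independent of `y`, of derivatives of `ȳ` of order at most `m`, the top coefficient
being `T/(g′)^m`. -/
theorem stmt_2 (m : ℕ) (g T : ℝ → ℝ)
    (hg : ContDiff ℝ (m : ℕ∞) g) (hT : ContDiff ℝ (m : ℕ∞) T)
    (hg' : ∀ x, deriv g x ≠ 0) (hT0 : ∀ x, T x ≠ 0) :
    ∃ cfun : ℕ → ℝ → ℝ,
      (cfun m = fun x => T x / (deriv g x) ^ m) ∧
      ∀ y : ℝ → ℝ, ContDiff ℝ (m : ℕ∞) y →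
        ∀ x : ℝ,
          iteratedDeriv m y (g x)
            = ∑ k ∈ Finset.range (m + 1),
                cfun k x * iteratedDeriv k (fun s => y (g s) / T s) x := by
  refine ⟨transformCoeff g T m, transformCoeff_self m, fun y hy x => ?_⟩
  exact iteratedDeriv_comp_eq_sum_transformCoeff hg hg' hT hT0 hy le_rfl x
end

section
/- Let F : ℝ → ℝ be infinitely differentiable with F′(x̄) ≠ 0 for all x̄, let a₀ : ℝ → ℝ and let a₁ : ℝ → ℝ be continuously differentiable. With S_F := F′′′/F′ − (3/2)(F″/F′)², define ā₁ := F′²·(a₁∘F) + 2S_F and ā₀ := F′³·(a₀∘F) + F′F″·(a₁∘F) + S_F′, and set μ := −2a₀ + a₁′ and μ̄ := −2ā₀ + ā₁′. Then for all x̄ ∈ ℝ, μ̄(x̄) = F′(x̄)³·μ(F(x̄)). -/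
/-- The Schwarzian derivative `S_F = F′′′/F′ − (3/2)(F″/F′)²`. -/
noncomputable def schwarzian (F : ℝ → ℝ) (x : ℝ) : ℝ :=
  iteratedDeriv 3 F x / deriv F x - (3 / 2) * (iteratedDeriv 2 F x / deriv F x) ^ 2

/-- The transformed coefficient `ā₁ = F′² (a₁∘F) + 2 S_F`. -/
noncomputable def abar1 (F a1 : ℝ → ℝ) (x : ℝ) : ℝ :=
  (deriv F x) ^ 2 * a1 (F x) + 2 * schwarzian F x

/-- The transformed coefficient `ā₀ = F′³ (a₀∘F) + F′F″ (a₁∘F) + S_F′`. -/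
noncomputable def abar0 (F a0 a1 : ℝ → ℝ) (x : ℝ) : ℝ :=
  (deriv F x) ^ 3 * a0 (F x) + deriv F x * iteratedDeriv 2 F x * a1 (F x)
    + deriv (schwarzian F) x

/-- `μ = −2a₀ + a₁′` is a semi-invariant of weight 3 of the normal form
of the third-order linear ODE: `μ̄(x̄) = F′(x̄)³ μ(F(x̄))`. -/
theorem stmt_8 (F : ℝ → ℝ) (hF : ContDiff ℝ (⊤ : ℕ∞) F) (hF' : ∀ x, deriv F x ≠ 0)
    (a0 a1 : ℝ → ℝ) (ha1 : ContDiff ℝ 1 a1) :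
    ∀ x : ℝ,
      (-2 * abar0 F a0 a1 x + deriv (fun s => abar1 F a1 s) x)
        = (deriv F x) ^ 3 * (-2 * a0 (F x) + deriv a1 (F x)) := by
  intro x
  have hid : ∀ n : ℕ, Differentiable ℝ (iteratedDeriv n F) := fun n =>
    hF.differentiable_iteratedDeriv n (by exact_mod_cast ENat.coe_lt_top n)
  have hdF : Differentiable ℝ (deriv F) := by
    have := hid 1
    rwa [iteratedDeriv_one] at this
  have h2 : DifferentiableAt ℝ (iteratedDeriv 2 F) x := hid 2 x
  have h3 : DifferentiableAt ℝ (iteratedDeriv 3 F) x := hid 3 x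
  have hSeq : schwarzian F = fun s =>
      iteratedDeriv 3 F s / deriv F s - (3 / 2) * (iteratedDeriv 2 F s / deriv F s) ^ 2 := rfl
  have hS : DifferentiableAt ℝ (schwarzian F) x := by
    rw [hSeq]
    exact (h3.div (hdF x) (hF' x)).sub
      ((differentiableAt_const _).mul ((h2.div (hdF x) (hF' x)).pow 2))
  have ha1d : Differentiable ℝ a1 := ha1.differentiable one_ne_zero
  have hcomp : DifferentiableAt ℝ (fun s => a1 (F s)) x :=
    (ha1d (F x)).comp x (hF.differentiable (by simp) x)
  have hdcomp : deriv (fun s => a1 (F s)) x = deriv a1 (F x) * deriv F x :=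
    deriv_comp x (ha1d (F x)) (hF.differentiable (by simp) x)
  have hsq : DifferentiableAt ℝ (fun s => (deriv F s) ^ 2) x := (hdF x).pow 2
  have hdd : deriv (deriv F) x = iteratedDeriv 2 F x := by
    rw [iteratedDeriv_succ, iteratedDeriv_one]
  have key : deriv (fun s => abar1 F a1 s) x
      = 2 * deriv F x * iteratedDeriv 2 F x * a1 (F x)
        + (deriv F x) ^ 2 * (deriv a1 (F x) * deriv F x)
        + 2 * deriv (schwarzian F) x := by
    have : (fun s => abar1 F a1 s)
        = fun s => (deriv F s) ^ 2 * a1 (F s) + 2 * schwarzian F s := rfl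
    rw [this, deriv_fun_add (hsq.fun_mul hcomp) ((differentiableAt_const _).fun_mul hS),
      deriv_fun_mul hsq hcomp, deriv_const_mul _ hS, deriv_fun_pow (hdF x) 2, hdcomp, hdd]
    ring
  rw [key, abar0]
  ring
end

section
/- Let F : ℝ → ℝ be infinitely differentiable with F′(x̄) ≠ 0 for all x̄, let a₀ : ℝ → ℝ be twice continuously differentiable and a₁ : ℝ → ℝ be three times continuously differentiable. With S_F := F′′′/F′ − (3/2)(F″/F′)², define ā₁ := F′²·(a₁∘F) + 2S_F, ā₀ := F′³·(a₀∘F) + F′F″·(a₁∘F) + S_F′, μ := −2a₀ + a₁′, μ̄ := −2ā₀ + ā₁′, Θ := 9a₁μ² + 7μ′² − 6μμ″, and Θ̄ := 9ā₁μ̄² + 7μ̄′² − 6μ̄μ̄″. Then for all x̄ ∈ ℝ, Θ̄(x̄) = F′(x̄)⁸·Θ(F(x̄)). -/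
open scoped ContDiff

/-- The semi-invariant `μ = −2p + q′` of the normal form `y′′′ + q y′ + p y = 0`. -/
noncomputable def muFun (p q : ℝ → ℝ) (x : ℝ) : ℝ := -2 * p x + deriv q x

/-- The function `Θ = 9qμ² + 7μ′² − 6μμ″` built from a coefficient pair `(p, q)`. -/
noncomputable def thetaFun (p q : ℝ → ℝ) (x : ℝ) : ℝ :=
  9 * q x * (muFun p q x) ^ 2 + 7 * (deriv (muFun p q) x) ^ 2
    - 6 * muFun p q x * iteratedDeriv 2 (muFun p q) x

/-- `Θ = 9a₁μ² + 7μ′² − 6μμ″` is a semi-invariant of weight 8 of the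
normal form of the third-order linear ODE: `Θ̄(x̄) = F′(x̄)⁸ Θ(F(x̄))`. -/
theorem stmt_9 (F : ℝ → ℝ) (hF : ContDiff ℝ (⊤ : ℕ∞) F) (hF' : ∀ x, deriv F x ≠ 0)
    (a0 a1 : ℝ → ℝ) (ha0 : ContDiff ℝ 2 a0) (ha1 : ContDiff ℝ 3 a1) :
    ∀ x : ℝ,
      thetaFun (abar0 F a0 a1) (abar1 F a1) x
        = (deriv F x) ^ 8 * thetaFun a0 a1 (F x) := by
  have hle1 : (∞ : WithTop ℕ∞) ≠ 0 := by simp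
  have hFi : ContDiff ℝ ∞ F := hF.of_le (by simp)
  have huC : ContDiff ℝ ∞ (deriv F) := (contDiff_infty_iff_deriv.mp hFi).2
  have hu1C : ContDiff ℝ ∞ (deriv (deriv F)) := (contDiff_infty_iff_deriv.mp huC).2
  have hu2C : ContDiff ℝ ∞ (deriv (deriv (deriv F))) := (contDiff_infty_iff_deriv.mp hu1C).2
  have hFd : ∀ y, HasDerivAt F (deriv F y) y := fun y => (hFi.differentiable hle1 y).hasDerivAt
  have hud : ∀ y, HasDerivAt (deriv F) (deriv (deriv F) y) y :=
    fun y => (huC.differentiable hle1 y).hasDerivAt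
  have hu1d : ∀ y, HasDerivAt (deriv (deriv F)) (deriv (deriv (deriv F)) y) y :=
    fun y => (hu1C.differentiable hle1 y).hasDerivAt
  have ha1d : ∀ y, HasDerivAt a1 (deriv a1 y) y :=
    fun y => (ha1.differentiable (by norm_num) y).hasDerivAt
  have ha1' : ContDiff ℝ 2 (deriv a1) := by
    have h : ContDiff ℝ ((2:ℕ∞)+1) a1 := by exact_mod_cast ha1
    exact (contDiff_succ_iff_deriv.mp h).2.2
  have hmC : ContDiff ℝ 2 (muFun a0 a1) := by
    have h : ContDiff ℝ 2 (fun y => -2 * a0 y + deriv a1 y) :=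
      (contDiff_const.mul ha0).add ha1'
    exact h
  have hm1C : ContDiff ℝ 1 (deriv (muFun a0 a1)) := by
    have h : ContDiff ℝ ((1:ℕ∞)+1) (muFun a0 a1) := by exact_mod_cast hmC
    exact (contDiff_succ_iff_deriv.mp h).2.2
  have hmd : ∀ y, HasDerivAt (muFun a0 a1) (deriv (muFun a0 a1) y) y :=
    fun y => (hmC.differentiable (by norm_num) y).hasDerivAt
  have hm1d : ∀ y, HasDerivAt (deriv (muFun a0 a1)) (deriv (deriv (muFun a0 a1)) y) y :=
    fun y => (hm1C.differentiable one_ne_zero y).hasDerivAt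
  have hit2 : ∀ g : ℝ → ℝ, iteratedDeriv 2 g = deriv (deriv g) := by
    intro g
    rw [show (2:ℕ) = 1 + 1 from rfl, iteratedDeriv_succ, iteratedDeriv_one]
  have hit3 : iteratedDeriv 3 F = deriv (deriv (deriv F)) := by
    rw [show (3:ℕ) = 2 + 1 from rfl, iteratedDeriv_succ, hit2]
  have hSd : Differentiable ℝ (schwarzian F) := by
    unfold schwarzian
    rw [hit3, hit2]
    exact ((hu2C.differentiable hle1).div (huC.differentiable hle1) hF').sub
      ((((hu1C.differentiable hle1).div (huC.differentiable hle1) hF').pow 2).const_mul (3/2))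
  -- Key step: μ̄ = F′³ (μ ∘ F)
  have hA : ∀ y, muFun (abar0 F a0 a1) (abar1 F a1) y
      = deriv F y ^ 3 * muFun a0 a1 (F y) := by
    intro y
    have h2 : HasDerivAt (fun z => a1 (F z)) (deriv a1 (F y) * deriv F y) y :=
      (ha1d (F y)).comp y (hFd y)
    have h1 : HasDerivAt (abar1 F a1)
        (2 * deriv F y * deriv (deriv F) y * a1 (F y)
          + deriv F y ^ 2 * deriv a1 (F y) * deriv F y
          + 2 * deriv (schwarzian F) y) y := by
      have h0 := (((hud y).fun_pow 2).fun_mul h2).fun_add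
        (HasDerivAt.const_mul (2:ℝ) ((hSd y).hasDerivAt))
      unfold abar1
      refine h0.congr_deriv ?_
      push_cast
      ring
    simp only [muFun, abar0]
    rw [h1.deriv, hit2]
    ring
  have hMu : muFun (abar0 F a0 a1) (abar1 F a1)
      = fun y => deriv F y ^ 3 * muFun a0 a1 (F y) := funext hA
  -- first derivative of μ̄
  have hD1 : ∀ y, HasDerivAt (fun z => deriv F z ^ 3 * muFun a0 a1 (F z))
      (3 * deriv F y ^ 2 * deriv (deriv F) y * muFun a0 a1 (F y)
        + deriv F y ^ 4 * deriv (muFun a0 a1) (F y)) y := by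
    intro y
    have h2 : HasDerivAt (fun z => muFun a0 a1 (F z))
        (deriv (muFun a0 a1) (F y) * deriv F y) y := (hmd (F y)).comp y (hFd y)
    have h0 := ((hud y).fun_pow 3).fun_mul h2
    refine h0.congr_deriv ?_
    push_cast
    ring
  have hG : deriv (fun z => deriv F z ^ 3 * muFun a0 a1 (F z))
      = fun z => 3 * deriv F z ^ 2 * deriv (deriv F) z * muFun a0 a1 (F z)
        + deriv F z ^ 4 * deriv (muFun a0 a1) (F z) := funext fun y => (hD1 y).deriv
  -- second derivative of μ̄
  have hD2 : ∀ y, HasDerivAt (fun z => 3 * deriv F z ^ 2 * deriv (deriv F) z * muFun a0 a1 (F z)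
        + deriv F z ^ 4 * deriv (muFun a0 a1) (F z))
      (6 * deriv F y * deriv (deriv F) y ^ 2 * muFun a0 a1 (F y)
        + 3 * deriv F y ^ 2 * deriv (deriv (deriv F)) y * muFun a0 a1 (F y)
        + 7 * deriv F y ^ 3 * deriv (deriv F) y * deriv (muFun a0 a1) (F y)
        + deriv F y ^ 5 * deriv (deriv (muFun a0 a1)) (F y)) y := by
    intro y
    have h2 : HasDerivAt (fun z => muFun a0 a1 (F z))
        (deriv (muFun a0 a1) (F y) * deriv F y) y := (hmd (F y)).comp y (hFd y)
    have h3 : HasDerivAt (fun z => deriv (muFun a0 a1) (F z))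
        (deriv (deriv (muFun a0 a1)) (F y) * deriv F y) y := (hm1d (F y)).comp y (hFd y)
    have hA1 : HasDerivAt (fun z => 3 * deriv F z ^ 2)
        (3 * (2 * deriv F y * deriv (deriv F) y)) y := by
      have h0 := HasDerivAt.const_mul (3:ℝ) ((hud y).fun_pow 2)
      refine h0.congr_deriv ?_
      push_cast
      ring
    have h0 := ((hA1.fun_mul (hu1d y)).fun_mul h2).fun_add (((hud y).fun_pow 4).fun_mul h3)
    refine h0.congr_deriv ?_
    push_cast
    ring
  intro x
  have hD2val := (hD2 x).deriv
  simp only [thetaFun, hMu, hG, hit2, abar1, schwarzian, hit3]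
  rw [hD2val]
  have hu := hF' x
  field_simp
  ring
end
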